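/- For every integer n ≥ 2, every (g,L) ∈ (0,1)×[0,∞), and every real S̃, one has γ(f_{g,L}, S̃) ≤ (1/(1+S̃²))·max{a_2, …, a_{n−1}, 2·max{1,|S̃|}·max{1, (g/(n·(√(1+S̃²) − g)))^{1/(n−1)}}}, where a_k = (g·|P_k(S̃)| / (k!·(√(1+S̃²) − g)))^{1/(k−1)}. -/

import Mathlib

/-!
Write `r = √(1 + S²)`. Since `f' = (r - g)/r` and `f^{(k)} = -g·(1 + S²)^{1/2-k}·P_k` for `k ≥ 2`,
the `k`-th term of `γ` is exactly `a_k/(1 + S²)`, so only the terms with `k ≥ n` need an estimate.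
For those, `|P_{k+1}(x)| ≤ k!·r^k`: the `P_k` satisfy a three-term recurrence which is also
satisfied, up to the factor `(-1)^k k!/π`, by the Laplace-type integrals
`∫₀^π (x + i cos θ)^k dθ`, and `|x + i cos θ| ≤ r`. Hence `a_k ≤ (g/(k(r - g)))^{1/(k-1)}·r`,
where the first factor is at most `max 1 ((g/(n(r - g)))^{1/(n-1)})` and `r ≤ 2·max 1 |S|`.
-/

noncomputable section

/-- The hyperbolic Kepler function `f_{g,L}(S) = S - g·arcsinh(S) - L`. -/
def fhk (g L : ℝ) : ℝ → ℝ := fun S => S - g * Real.arsinh S - L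

/-- `β(f,z) = |f(z)/f'(z)|`. -/
def betaFn (f : ℝ → ℝ) (z : ℝ) : ℝ := |f z / deriv f z|

/-- `γ(f,z) = sup_{k ≥ 2} |f^{(k)}(z)/(k!·f'(z))|^{1/(k-1)}`. -/
def gammaFn (f : ℝ → ℝ) (z : ℝ) : ℝ :=
  sSup {y : ℝ | ∃ k : ℕ, 2 ≤ k ∧
    y = |iteratedDeriv k f z / (Nat.factorial k * deriv f z)| ^ ((1 : ℝ) / ((k : ℝ) - 1))}

/-- `α(f,z) = β(f,z)·γ(f,z)`. -/
def alphaFn (f : ℝ → ℝ) (z : ℝ) : ℝ := betaFn f z * gammaFn f z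

/-- Smale's constant (improved by Wang–Han): `α₀ = 3 - 2√2`. -/
def alpha0 : ℝ := 3 - 2 * Real.sqrt 2

/-- `z` is an approximate zero of `f` when `α(f,z) < α₀`. -/
def ApproxZero (f : ℝ → ℝ) (z : ℝ) : Prop := alphaFn f z < alpha0

open Polynomial in
/-- The polynomials `P_k` defined by `P₁ = 1` and
`P_{k+1}(X) = (1-2k)·X·P_k(X) + (1+X²)·P_k'(X)` for `k ≥ 1`. -/
def P : ℕ → Polynomial ℝ
  | 0 => 0
  | 1 => 1
  | (k + 2) => C (1 - 2 * ((k : ℝ) + 1)) * X * P (k + 1)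
      + (1 + X ^ 2) * derivative (P (k + 1))

open Polynomial
open scoped Nat

theorem Real.rpow_le_max_one_rpow {x y s t : ℝ} (hx : 0 ≤ x) (hxy : x ≤ y) (hs : 0 ≤ s)
    (hst : s ≤ t) : x ^ s ≤ max 1 (y ^ t) := by
  rcases le_or_gt x 1 with hx1 | hx1
  · exact (Real.rpow_le_one hx hx1 hs).trans (le_max_left _ _)
  · calc x ^ s ≤ x ^ t := Real.rpow_le_rpow_of_exponent_le hx1.le hst
      _ ≤ y ^ t := Real.rpow_le_rpow hx hxy (hs.trans hst)
      _ ≤ max 1 (y ^ t) := le_max_right _ _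

theorem Real.sqrt_one_add_sq_le (x : ℝ) : √(1 + x ^ 2) ≤ 2 * max 1 |x| := by
  rw [Real.sqrt_le_left (by positivity)]
  nlinarith [le_max_left 1 |x|, le_max_right 1 |x|, sq_abs x, abs_nonneg x]

def gammaTerm (f : ℝ → ℝ) (z : ℝ) (k : ℕ) : ℝ :=
  |iteratedDeriv k f z / (Nat.factorial k * deriv f z)| ^ ((1 : ℝ) / ((k : ℝ) - 1))

theorem gammaFn_le {f : ℝ → ℝ} {z B : ℝ} (h : ∀ k, 2 ≤ k → gammaTerm f z k ≤ B) :
    gammaFn f z ≤ B :=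
  csSup_le ⟨_, 2, le_rfl, rfl⟩ fun _ ⟨k, hk, hy⟩ => hy ▸ h k hk

namespace P

theorem one : P 1 = 1 := rfl

theorem succ_succ (k : ℕ) :
    P (k + 2) =
      C (1 - 2 * ((k : ℝ) + 1)) * X * P (k + 1) + (1 + X ^ 2) * derivative (P (k + 1)) := by
  rw [P]

theorem two : P 2 = -X := by
  rw [succ_succ, one]
  norm_num

theorem succ {k : ℕ} (hk : 1 ≤ k) :
    P (k + 1) = C (1 - 2 * (k : ℝ)) * X * P k + (1 + X ^ 2) * derivative (P k) := by
  obtain ⟨k, rfl⟩ := Nat.exists_eq_add_of_le' hk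
  simpa using succ_succ k

theorem derivative_succ (k : ℕ) : derivative (P (k + 1)) = C (-(k : ℝ) ^ 2) * P k := by
  induction k with
  | zero => simp [one]
  | succ k ih =>
    have key : C ((k : ℝ) ^ 2) * P (k + 1) =
        C ((k : ℝ) ^ 2) * (C (1 - 2 * (k : ℝ)) * X * P k + (1 + X ^ 2) * derivative (P k)) := by
      rcases Nat.eq_zero_or_pos k with rfl | hk
      · simp
      · rw [succ hk]
    simp only [succ_succ, derivative_mul, ih, map_sub, map_mul, map_add,
      map_pow, map_one, map_neg, map_natCast, map_ofNat, derivative_X, derivative_one,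
      derivative_pow, derivative_natCast, derivative_ofNat, Nat.cast_succ] at key ⊢
    linear_combination key

theorem three_term (k : ℕ) :
    P (k + 2) = C (-(2 * (k : ℝ) + 1)) * X * P (k + 1) + C (-(k : ℝ) ^ 2) * (1 + X ^ 2) * P k := by
  rw [succ_succ, derivative_succ]
  simp only [map_sub, map_add, map_mul, map_one, map_neg, map_pow, map_ofNat]
  ring

end P

section Laplace

open Complex intervalIntegral
open MeasureTheory (volume)

def laplaceIntegral (n : ℕ) (x : ℝ) : ℂ :=
  ∫ θ in (0 : ℝ)..Real.pi, ((x : ℂ) + I * Real.cos θ) ^ n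

theorem continuous_laplaceIntegrand (n : ℕ) (x : ℝ) :
    Continuous fun θ : ℝ => ((x : ℂ) + I * Real.cos θ) ^ n := by
  fun_prop

theorem laplaceIntegral_zero (x : ℝ) : laplaceIntegral 0 x = Real.pi := by
  simp [laplaceIntegral]

theorem laplaceIntegral_one (x : ℝ) : laplaceIntegral 1 x = Real.pi * x := by
  have hcos : IntervalIntegrable (fun θ : ℝ => I * (Real.cos θ : ℂ)) volume 0 Real.pi :=
    (by fun_prop : Continuous fun θ : ℝ => I * (Real.cos θ : ℂ)).intervalIntegrable _ _
  simp only [laplaceIntegral, pow_one]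
  rw [integral_add intervalIntegrable_const hcos,
    integral_const_mul, integral_ofReal, integral_ofReal, integral_cos]
  simp [mul_comm]

theorem hasDerivAt_sin_mul_pow (m : ℕ) (x θ : ℝ) :
    HasDerivAt (fun θ : ℝ => (Real.sin θ : ℂ) * ((x : ℂ) + I * Real.cos θ) ^ (m + 1))
      (-I * ((m + 2) * ((x : ℂ) + I * Real.cos θ) ^ (m + 2)
        - (2 * m + 3) * x * ((x : ℂ) + I * Real.cos θ) ^ (m + 1)
        + (m + 1) * (1 + (x : ℂ) ^ 2) * ((x : ℂ) + I * Real.cos θ) ^ m)) θ := by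
  have hsin : HasDerivAt (fun θ : ℝ => (Real.sin θ : ℂ)) (Real.cos θ) θ :=
    (Real.hasDerivAt_sin θ).ofReal_comp
  have hw : HasDerivAt (fun θ : ℝ => (x : ℂ) + I * Real.cos θ) (I * -Real.sin θ) θ := by
    simpa using ((Real.hasDerivAt_cos θ).ofReal_comp.const_mul I).const_add (x : ℂ)
  refine (hsin.mul (hw.fun_pow (m + 1))).congr_deriv ?_
  have hs : (Real.sin θ : ℂ) ^ 2 = 1 - (Real.cos θ : ℂ) ^ 2 := by
    rw [eq_sub_iff_add_eq]; exact_mod_cast Real.sin_sq_add_cos_sq θ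
  simp only [Nat.cast_add, Nat.cast_one, Nat.add_sub_cancel]
  linear_combination -(I * (m + 1) * ((x : ℂ) + I * Real.cos θ) ^ m) * hs
    + ((x : ℂ) + I * Real.cos θ) ^ m * (Real.cos θ * x + (m + 2) * I * Real.cos θ ^ 2) * I_sq

theorem laplaceIntegral_add_two (m : ℕ) (x : ℝ) :
    (m + 2) * laplaceIntegral (m + 2) x =
      (2 * m + 3) * x * laplaceIntegral (m + 1) x
        - (m + 1) * (1 + (x : ℂ) ^ 2) * laplaceIntegral m x := by
  have hint (c : ℂ) (n : ℕ) : IntervalIntegrable (fun θ : ℝ => c * ((x : ℂ) + I * Real.cos θ) ^ n)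
      volume 0 Real.pi :=
    (continuous_const.mul (continuous_laplaceIntegrand n x)).intervalIntegrable _ _
  have h := integral_eq_sub_of_hasDerivAt (fun θ _ => hasDerivAt_sin_mul_pow m x θ)
    ((((hint _ _).sub (hint _ _)).add (hint _ _)).const_mul _)
  rw [integral_const_mul, integral_add ((hint _ _).sub (hint _ _)) (hint _ _),
    integral_sub (hint _ _) (hint _ _), integral_const_mul, integral_const_mul,
    integral_const_mul] at h
  simp only [Real.sin_pi, Real.sin_zero, ofReal_zero, zero_mul, sub_zero, mul_eq_zero, neg_eq_zero,
    I_ne_zero, false_or] at h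
  simp only [laplaceIntegral]
  linear_combination h

theorem pi_mul_eval_P_succ (k : ℕ) (x : ℝ) :
    (Real.pi : ℂ) * (((P (k + 1)).eval x : ℝ) : ℂ) = (-1) ^ k * k ! * laplaceIntegral k x := by
  induction k using Nat.twoStepInduction with
  | zero => simp [P.one, laplaceIntegral_zero]
  | one => simp [P.two, laplaceIntegral_one]
  | more k ih₀ ih₁ =>
    rw [P.three_term (k + 1)]
    simp only [eval_add, eval_mul, eval_C, eval_X, eval_pow, eval_one, Nat.factorial_succ] at ih₁ ⊢
    push_cast at ih₀ ih₁ ⊢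
    linear_combination (-(2 * (k : ℂ) + 3) * x) * ih₁
      + (-((k : ℂ) + 1) ^ 2 * (1 + (x : ℂ) ^ 2)) * ih₀
      + ((-1) ^ (k + 1) * ((k : ℂ) + 1) * k !) * laplaceIntegral_add_two k x

theorem norm_laplaceIntegral_le (n : ℕ) (x : ℝ) :
    ‖laplaceIntegral n x‖ ≤ √(1 + x ^ 2) ^ n * Real.pi := by
  have hbound (θ : ℝ) : ‖((x : ℂ) + I * Real.cos θ) ^ n‖ ≤ √(1 + x ^ 2) ^ n := by
    rw [norm_pow, mul_comm I, norm_add_mul_I]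
    exact pow_le_pow_left₀ (Real.sqrt_nonneg _)
      (Real.sqrt_le_sqrt (by linarith [Real.cos_sq_le_one θ])) n
  have h := norm_integral_le_of_norm_le_const (a := 0) (b := Real.pi) fun θ _ => hbound θ
  rwa [sub_zero, abs_of_pos Real.pi_pos] at h

theorem abs_eval_P_succ_le (k : ℕ) (x : ℝ) : |(P (k + 1)).eval x| ≤ k ! * √(1 + x ^ 2) ^ k := by
  have h := congrArg norm (pi_mul_eval_P_succ k x)
  simp only [norm_mul, norm_pow, norm_neg, norm_one, one_pow, one_mul, norm_real, norm_natCast,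
    Real.norm_eq_abs, abs_of_pos Real.pi_pos] at h
  refine le_of_mul_le_mul_left ?_ Real.pi_pos
  calc Real.pi * |(P (k + 1)).eval x| = k ! * ‖laplaceIntegral k x‖ := h
    _ ≤ k ! * (√(1 + x ^ 2) ^ k * Real.pi) := by gcongr; exact norm_laplaceIntegral_le k x
    _ = Real.pi * (k ! * √(1 + x ^ 2) ^ k) := by ring

end Laplace

theorem hasDerivAt_rpow_mul_eval_P (k : ℕ) (x : ℝ) :
    HasDerivAt (fun y => (1 + y ^ 2) ^ ((1 : ℝ) / 2 - (k + 1 : ℕ)) * (P (k + 1)).eval y)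
      ((1 + x ^ 2) ^ ((1 : ℝ) / 2 - (k + 2 : ℕ)) * (P (k + 2)).eval x) x := by
  have hpos : 0 < 1 + x ^ 2 := by positivity
  have hbase : HasDerivAt (fun y : ℝ => 1 + y ^ 2) (2 * x) x := by
    simpa using (hasDerivAt_pow 2 x).const_add 1
  refine ((hbase.rpow_const (Or.inl hpos.ne')).mul ((P (k + 1)).hasDerivAt x)).congr_deriv ?_
  have hsplit : (1 + x ^ 2) ^ ((1 : ℝ) / 2 - (k + 1 : ℕ)) =
      (1 + x ^ 2) ^ ((1 : ℝ) / 2 - (k + 2 : ℕ)) * (1 + x ^ 2) := by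
    rw [← Real.rpow_add_one hpos.ne']; push_cast; ring_nf
  rw [hsplit, P.succ_succ]
  simp only [eval_add, eval_mul, eval_C, eval_X, eval_pow, eval_one]
  push_cast
  ring_nf

theorem iteratedDeriv_arsinh {k : ℕ} (hk : 1 ≤ k) :
    iteratedDeriv k Real.arsinh = fun x => (1 + x ^ 2) ^ ((1 : ℝ) / 2 - k) * (P k).eval x := by
  obtain ⟨k, rfl⟩ := Nat.exists_eq_add_of_le' hk
  induction k with
  | zero =>
    ext x
    rw [iteratedDeriv_one, (Real.hasDerivAt_arsinh x).deriv, Real.sqrt_eq_rpow,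
      ← Real.rpow_neg (by positivity)]
    norm_num [P.one]
  | succ k ih =>
    ext x
    rw [iteratedDeriv_succ, ih (by omega), (hasDerivAt_rpow_mul_eval_P k x).deriv]

theorem hasDerivAt_fhk (g L x : ℝ) : HasDerivAt (fhk g L) (1 - g * (√(1 + x ^ 2))⁻¹) x :=
  ((hasDerivAt_id x).sub ((Real.hasDerivAt_arsinh x).const_mul g)).sub_const L

theorem iteratedDeriv_fhk {k : ℕ} (hk : 2 ≤ k) (g L x : ℝ) :
    iteratedDeriv k (fhk g L) x = -g * ((1 + x ^ 2) ^ ((1 : ℝ) / 2 - k) * (P k).eval x) := by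
  obtain ⟨j, rfl⟩ : ∃ j, k = j + 1 + 1 := ⟨k - 2, by omega⟩
  have hderiv : deriv (fhk g L) = fun y => 1 - g * deriv Real.arsinh y := by
    ext y; rw [(hasDerivAt_fhk g L y).deriv, (Real.hasDerivAt_arsinh y).deriv]
  rw [iteratedDeriv_succ', hderiv, iteratedDeriv_const_sub (by omega), iteratedDeriv_neg,
    iteratedDeriv_const_mul_field, ← iteratedDeriv_succ', iteratedDeriv_arsinh (by omega), neg_mul]

def keplerCoeff (g x : ℝ) (k : ℕ) : ℝ :=
  (g * |(P k).eval x| / (k ! * (√(1 + x ^ 2) - g))) ^ ((1 : ℝ) / (k - 1))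

theorem gammaTerm_fhk {k : ℕ} (hk : 2 ≤ k) {g : ℝ} (hg : 0 ≤ g) (L x : ℝ)
    (hgx : g < √(1 + x ^ 2)) :
    gammaTerm (fhk g L) x k = 1 / (1 + x ^ 2) * keplerCoeff g x k := by
  have hpos : 0 < 1 + x ^ 2 := by positivity
  have hr : 0 < √(1 + x ^ 2) := Real.sqrt_pos.2 hpos
  have hsplit : (1 + x ^ 2) ^ ((1 : ℝ) - k) = (1 + x ^ 2) ^ ((1 : ℝ) / 2 - k) * √(1 + x ^ 2) := by
    rw [Real.sqrt_eq_rpow, ← Real.rpow_add hpos]; ring_nf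
  have hratio : |iteratedDeriv k (fhk g L) x / (k ! * deriv (fhk g L) x)| =
      g * |(P k).eval x| / (k ! * (√(1 + x ^ 2) - g)) * (1 + x ^ 2) ^ ((1 : ℝ) - k) := by
    have hderiv : deriv (fhk g L) x = (√(1 + x ^ 2) - g) / √(1 + x ^ 2) := by
      rw [(hasDerivAt_fhk g L x).deriv]; field_simp
    have hden : 0 < (k ! : ℝ) * ((√(1 + x ^ 2) - g) / √(1 + x ^ 2)) := by
      have := sub_pos.2 hgx; positivity
    rw [iteratedDeriv_fhk hk, hderiv, hsplit, abs_div, abs_of_pos hden, abs_mul, abs_mul,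
      abs_neg, abs_of_nonneg hg, abs_of_pos (Real.rpow_pos_of_pos hpos _)]
    field_simp
  have hcoeff : 0 ≤ g * |(P k).eval x| / (k ! * (√(1 + x ^ 2) - g)) := by
    have := sub_pos.2 hgx; positivity
  have hexp : ((1 : ℝ) - k) * (1 / (k - 1)) = -1 := by
    have : (2 : ℝ) ≤ k := by exact_mod_cast hk
    rw [← neg_sub, neg_mul, mul_one_div_cancel (by linarith : (0 : ℝ) < k - 1).ne']
  rw [gammaTerm, keplerCoeff, hratio, Real.mul_rpow hcoeff (Real.rpow_nonneg hpos.le _),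
    ← Real.rpow_mul hpos.le, hexp, Real.rpow_neg_one, mul_comm, inv_eq_one_div]

theorem keplerCoeff_le_of_le {n k : ℕ} (hn : 2 ≤ n) (hnk : n ≤ k) {g : ℝ} (hg : 0 ≤ g) (x : ℝ)
    (hgx : g < √(1 + x ^ 2)) :
    keplerCoeff g x k ≤ 2 * max 1 |x| * max 1 ((g / (n * (√(1 + x ^ 2) - g))) ^ ((1 : ℝ) / (n - 1))) := by
  obtain ⟨j, rfl⟩ : ∃ j, k = j + 1 := ⟨k - 1, by omega⟩
  rw [keplerCoeff]
  set r := √(1 + x ^ 2)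
  have hd : 0 < r - g := sub_pos.2 hgx
  have hj : j ≠ 0 := by omega
  have hexp : (1 : ℝ) / ((j + 1 : ℕ) - 1) = (j : ℝ)⁻¹ := by push_cast; ring
  have hcoeff : g * |(P (j + 1)).eval x| / ((j + 1)! * (r - g)) ≤
      g / ((j + 1 : ℕ) * (r - g)) * r ^ j := by
    calc g * |(P (j + 1)).eval x| / ((j + 1)! * (r - g))
        ≤ g * (j ! * r ^ j) / ((j + 1)! * (r - g)) := by gcongr; exact abs_eval_P_succ_le j x
      _ = g / ((j + 1 : ℕ) * (r - g)) * r ^ j := by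
        rw [Nat.factorial_succ]; push_cast; field_simp
  have hratio : g / ((j + 1 : ℕ) * (r - g)) ≤ g / (n * (r - g)) := by gcongr
  have hexp_le : (j : ℝ)⁻¹ ≤ 1 / (n - 1) := by
    have h2n : (2 : ℝ) ≤ n := by exact_mod_cast hn
    have hnj : (n : ℝ) ≤ j + 1 := by exact_mod_cast hnk
    rw [one_div]; gcongr <;> linarith
  calc (g * |(P (j + 1)).eval x| / ((j + 1)! * (r - g))) ^ ((1 : ℝ) / ((j + 1 : ℕ) - 1))
      ≤ (g / ((j + 1 : ℕ) * (r - g)) * r ^ j) ^ (j : ℝ)⁻¹ := by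
        rw [hexp]; gcongr
    _ = (g / ((j + 1 : ℕ) * (r - g))) ^ (j : ℝ)⁻¹ * r := by
        rw [Real.mul_rpow (by positivity) (by positivity),
          Real.pow_rpow_inv_natCast (by positivity) hj]
    _ ≤ max 1 ((g / (n * (r - g))) ^ ((1 : ℝ) / (n - 1))) * (2 * max 1 |x|) := by
        gcongr
        · exact Real.rpow_le_max_one_rpow (by positivity) hratio (by positivity) hexp_le
        · exact Real.sqrt_one_add_sq_le x
    _ = _ := mul_comm _ _

theorem gamma_upper_bound_general (n : ℕ) (hn : 2 ≤ n) (g L : ℝ) (hg0 : 0 < g) (hg1 : g < 1)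
    (S : ℝ) :
    gammaFn (fhk g L) S ≤
      (1 / (1 + S ^ 2)) *
        Finset.fold max
          (2 * max 1 |S| *
            max 1 ((g / (n * (Real.sqrt (1 + S ^ 2) - g))) ^ ((1 : ℝ) / ((n : ℝ) - 1))))
          (fun k =>
            (g * |(P k).eval S| / (Nat.factorial k * (Real.sqrt (1 + S ^ 2) - g))) ^
              ((1 : ℝ) / ((k : ℝ) - 1)))
          (Finset.Ico 2 n) := by
  have hgS : g < √(1 + S ^ 2) :=
    hg1.trans_le (Real.one_le_sqrt.2 (le_add_of_nonneg_right (sq_nonneg S)))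
  refine gammaFn_le fun k hk => ?_
  rw [gammaTerm_fhk hk hg0.le L S hgS]
  refine mul_le_mul_of_nonneg_left ?_ (by positivity)
  rcases lt_or_ge k n with hkn | hnk
  · exact (Finset.le_fold_max _).2 (Or.inr ⟨k, Finset.mem_Ico.2 ⟨hk, hkn⟩, le_rfl⟩)
  · exact (Finset.le_fold_max _).2 (Or.inl (keplerCoeff_le_of_le hn hnk hg0.le S hgS))

/-- Lemma 2.3: for `n ≥ 2`, `(g,L) ∈ (0,1)×[0,∞)` and any real `S̃`,
`γ(f_{g,L},S̃) ≤ (1/(1+S̃²))·max{a₂,…,a_{n-1}, 2·max{1,|S̃|}·max{1,(g/(n(√(1+S̃²)-g)))^{1/(n-1)}}}`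
where `a_k = (g·|P_k(S̃)|/(k!·(√(1+S̃²)-g)))^{1/(k-1)}`. -/
theorem gamma_upper_bound (n : ℕ) (hn : 2 ≤ n) (g L : ℝ) (hg0 : 0 < g) (hg1 : g < 1)
    (hL : 0 ≤ L) (S : ℝ) :
    gammaFn (fhk g L) S ≤
      (1 / (1 + S ^ 2)) *
        Finset.fold max
          (2 * max 1 |S| *
            max 1 ((g / (n * (Real.sqrt (1 + S ^ 2) - g))) ^ ((1 : ℝ) / ((n : ℝ) - 1))))
          (fun k =>
            (g * |(P k).eval S| / (Nat.factorial k * (Real.sqrt (1 + S ^ 2) - g))) ^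
              ((1 : ℝ) / ((k : ℝ) - 1)))
          (Finset.Ico 2 n) :=
  gamma_upper_bound_general n hn g L hg0 hg1 S
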